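/- For every bipartite density matrix σ on ℂ^{dA}⊗ℂ^{dB} there exist a dimension d_in equal to the rank of σ, an isometry V : ℂ^{d_in} → ℂ^{dA}⊗ℂ^{dB} (V†V = I), and a positive definite density matrix ρ on ℂ^{d_in}, such that V ρ V† = σ; consequently, the channel N defined by N(μ) = Tr_B(V μ V†) satisfies N(ρ) = Tr_B σ and χ_N(ρ) = H(Tr_B σ) − E_F(σ). -/

import Mathlib

open scoped Kronecker Matrix ComplexOrder

noncomputable section

/-- The von Neumann entropy `H(ρ) = -∑ᵢ λᵢ log λᵢ` of a Hermitian matrix,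
where the `λᵢ` are its eigenvalues (with the convention `0 log 0 = 0`,
which holds automatically since `Real.log 0 = 0`). -/
def vNEntropy {n : Type} [Fintype n] [DecidableEq n] (ρ : Matrix n n ℂ) : ℝ :=
  if h : ρ.IsHermitian then -∑ i, h.eigenvalues i * Real.log (h.eigenvalues i) else 0

/-- A density matrix: positive semidefinite with trace 1. -/
def IsDensityMatrix {n : Type} [Fintype n] [DecidableEq n] (ρ : Matrix n n ℂ) : Prop :=
  ρ.PosSemidef ∧ ρ.trace = 1

/-- The rank-one matrix `|v⟩⟨v|`. -/
def outer {n : Type} [Fintype n] (v : n → ℂ) : Matrix n n ℂ :=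
  Matrix.vecMulVec v (star v)

/-- A unit vector. -/
def IsUnitVec {n : Type} [Fintype n] (v : n → ℂ) : Prop :=
  ∑ a, ‖v a‖ ^ 2 = 1

/-- A quantum channel, given by a finite family of Kraus operators `A k`
satisfying the completeness relation `∑ k, (A k)ᴴ * A k = 1`. -/
structure QChannel (I O : Type) [Fintype I] [DecidableEq I] [Fintype O] [DecidableEq O] :
    Type 1 where
  ι : Type
  [instFintype : Fintype ι]
  A : ι → Matrix O I ℂ
  complete : ∑ k, (A k)ᴴ * A k = 1

attribute [instance] QChannel.instFintype

/-- The action `N(ρ) = ∑ₖ Aₖ ρ Aₖᴴ` of a channel on a matrix. -/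
def QChannel.app {I O : Type} [Fintype I] [DecidableEq I] [Fintype O] [DecidableEq O]
    (N : QChannel I O) (ρ : Matrix I I ℂ) : Matrix O O ℂ :=
  ∑ k, N.A k * ρ * (N.A k)ᴴ

theorem kronecker_conjT {l m n p : Type} (A : Matrix l m ℂ) (B : Matrix n p ℂ) :
    (A ⊗ₖ B)ᴴ = Aᴴ ⊗ₖ Bᴴ := by
  ext ⟨i, j⟩ ⟨k, s⟩
  simp [Matrix.conjTranspose_apply, mul_comm]

theorem sum_kronecker_sum {ι₁ ι₂ l m n p : Type} [Fintype ι₁] [Fintype ι₂]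
    (A : ι₁ → Matrix l m ℂ) (B : ι₂ → Matrix n p ℂ) :
    (∑ i, A i) ⊗ₖ (∑ j, B j) = ∑ k : ι₁ × ι₂, A k.1 ⊗ₖ B k.2 := by
  ext ⟨x, y⟩ ⟨x', y'⟩
  simp only [Matrix.sum_apply, Matrix.kroneckerMap_apply, Finset.sum_mul_sum]
  exact (Fintype.sum_prod_type (fun k : ι₁ × ι₂ => A k.1 x x' * B k.2 y y')).symm

/-- The tensor-product channel `N₁ ⊗ N₂`: its Kraus operators are the Kronecker
products of the Kraus operators of the two factors. -/
def QChannel.prod {I₁ O₁ I₂ O₂ : Type}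
    [Fintype I₁] [DecidableEq I₁] [Fintype O₁] [DecidableEq O₁]
    [Fintype I₂] [DecidableEq I₂] [Fintype O₂] [DecidableEq O₂]
    (N₁ : QChannel I₁ O₁) (N₂ : QChannel I₂ O₂) : QChannel (I₁ × I₂) (O₁ × O₂) where
  ι := N₁.ι × N₂.ι
  A := fun k => N₁.A k.1 ⊗ₖ N₂.A k.2
  complete := by
    have h1 : ∀ k : N₁.ι × N₂.ι, (N₁.A k.1 ⊗ₖ N₂.A k.2)ᴴ * (N₁.A k.1 ⊗ₖ N₂.A k.2)
        = ((N₁.A k.1)ᴴ * N₁.A k.1) ⊗ₖ ((N₂.A k.2)ᴴ * N₂.A k.2) := fun k => by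
      rw [kronecker_conjT, Matrix.mul_kronecker_mul]
    rw [Finset.sum_congr rfl fun k _ => h1 k,
      ← sum_kronecker_sum (fun k₁ => (N₁.A k₁)ᴴ * N₁.A k₁) (fun k₂ => (N₂.A k₂)ᴴ * N₂.A k₂),
      N₁.complete, N₂.complete, Matrix.one_kronecker_one]

/-- The minimum output entropy of a channel: the minimum of `H(N(|v⟩⟨v|))`
over unit vectors `v` in the input space. -/
def minOutEntropy {I O : Type} [Fintype I] [DecidableEq I] [Fintype O] [DecidableEq O]
    (N : QChannel I O) : ℝ :=
  sInf { x | ∃ v : I → ℂ, IsUnitVec v ∧ x = vNEntropy (N.app (outer v)) }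

/-- The Holevo capacity `χ_N` of a channel. -/
def holevoCap {I O : Type} [Fintype I] [DecidableEq I] [Fintype O] [DecidableEq O]
    (N : QChannel I O) : ℝ :=
  sSup { x | ∃ (n : ℕ) (p : Fin n → ℝ) (v : Fin n → I → ℂ),
    (∀ i, 0 ≤ p i) ∧ (∑ i, p i = 1) ∧ (∀ i, IsUnitVec (v i)) ∧
    x = vNEntropy (N.app (∑ i, (p i : ℂ) • outer (v i))) -
      ∑ i, p i * vNEntropy (N.app (outer (v i))) }

/-- The constrained Holevo capacity `χ_N(ρ)`: only ensembles averaging to `ρ` are allowed. -/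
def cHolevoCap {I O : Type} [Fintype I] [DecidableEq I] [Fintype O] [DecidableEq O]
    (N : QChannel I O) (ρ : Matrix I I ℂ) : ℝ :=
  sSup { x | ∃ (n : ℕ) (p : Fin n → ℝ) (v : Fin n → I → ℂ),
    (∀ i, 0 ≤ p i) ∧ (∑ i, p i = 1) ∧ (∀ i, IsUnitVec (v i)) ∧
    (∑ i, (p i : ℂ) • outer (v i)) = ρ ∧
    x = vNEntropy (N.app ρ) - ∑ i, p i * vNEntropy (N.app (outer (v i))) }

/-- Partial trace over the second (B) factor of a bipartite matrix. -/
def traceB {A B : Type} [Fintype B] (σ : Matrix (A × B) (A × B) ℂ) : Matrix A A ℂ :=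
  Matrix.of fun a a' => ∑ b, σ (a, b) (a', b)

/-- The entanglement of formation of a bipartite state on `A ⊗ B`. -/
def entF {A B : Type} [Fintype A] [DecidableEq A] [Fintype B] [DecidableEq B]
    (σ : Matrix (A × B) (A × B) ℂ) : ℝ :=
  sInf { x | ∃ (n : ℕ) (p : Fin n → ℝ) (v : Fin n → A × B → ℂ),
    (∀ i, 0 ≤ p i) ∧ (∀ i, IsUnitVec (v i)) ∧
    (∑ i, (p i : ℂ) • outer (v i)) = σ ∧
    x = ∑ i, p i * vNEntropy (traceB (outer (v i))) }

/-- The tensor product of two bipartite states `σ₁` on `A₁ ⊗ B₁` and `σ₂` on `A₂ ⊗ B₂`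
(Kronecker product), reindexed as a bipartite state with A-part `A₁ ⊗ A₂` and
B-part `B₁ ⊗ B₂`. -/
def pairTensor {A₁ B₁ A₂ B₂ : Type}
    (σ₁ : Matrix (A₁ × B₁) (A₁ × B₁) ℂ) (σ₂ : Matrix (A₂ × B₂) (A₂ × B₂) ℂ) :
    Matrix ((A₁ × A₂) × (B₁ × B₂)) ((A₁ × A₂) × (B₁ × B₂)) ℂ :=
  Matrix.of fun x y =>
    σ₁ (x.1.1, x.2.1) (y.1.1, y.2.1) * σ₂ (x.1.2, x.2.2) (y.1.2, y.2.2)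

/-- Trace out the second subsystem (`A₂` and `B₂`) of a quadripartite state. -/
def trace2 {A₁ A₂ B₁ B₂ : Type} [Fintype A₂] [Fintype B₂]
    (σ : Matrix ((A₁ × A₂) × (B₁ × B₂)) ((A₁ × A₂) × (B₁ × B₂)) ℂ) :
    Matrix (A₁ × B₁) (A₁ × B₁) ℂ :=
  Matrix.of fun x y => ∑ a₂, ∑ b₂, σ ((x.1, a₂), (x.2, b₂)) ((y.1, a₂), (y.2, b₂))

/-- Trace out the first subsystem (`A₁` and `B₁`) of a quadripartite state. -/
def trace1 {A₁ A₂ B₁ B₂ : Type} [Fintype A₁] [Fintype B₁]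
    (σ : Matrix ((A₁ × A₂) × (B₁ × B₂)) ((A₁ × A₂) × (B₁ × B₂)) ℂ) :
    Matrix (A₂ × B₂) (A₂ × B₂) ℂ :=
  Matrix.of fun x y => ∑ a₁, ∑ b₁, σ ((a₁, x.1), (b₁, x.2)) ((a₁, y.1), (b₁, y.2))


/-!
Diagonalising `σ` and keeping only the eigenvectors with nonzero eigenvalue gives an isometry `V`
onto the support of `σ` and a positive definite `ρ` with `V ρ Vᴴ = σ`. Since `V` is an isometry
and every vector of an ensemble for `σ` with positive weight lies in the range of `V`,
`v ↦ V v` is a bijection between the ensembles for `ρ` and those for `σ`, under which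
`H(N(|v⟩⟨v|)) = H(Tr_B |V v⟩⟨V v|)`. Hence the Holevo quantities of `N` at `ρ` are exactly the
numbers `H(Tr_B σ) - x` with `x` an average entanglement entropy of a decomposition of `σ`, and
the supremum of the former is `H(Tr_B σ)` minus the infimum of the latter.
-/

open Matrix

section Ensemble

variable {ι n m : Type} [Fintype ι] [Fintype n] [Fintype m]

def ensembleAvg (p : ι → ℝ) (v : ι → n → ℂ) : Matrix n n ℂ :=
  ∑ i, (p i : ℂ) • outer (v i)

lemma trace_outer (v : n → ℂ) : (outer v).trace = ((∑ x, ‖v x‖ ^ 2 : ℝ) : ℂ) := by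
  simp [Matrix.trace, outer, vecMulVec_apply, Complex.mul_conj, Complex.normSq_eq_norm_sq]

lemma nonempty_of_trace_eq_one {ρ : Matrix n n ℂ} (hρ : ρ.trace = 1) : Nonempty n := by
  by_contra h
  rw [not_nonempty_iff] at h
  exact zero_ne_one (hρ ▸ (trace_eq_zero_of_isEmpty ρ).symm)

lemma isUnitVec_iff_trace_outer (v : n → ℂ) : IsUnitVec v ↔ (outer v).trace = 1 := by
  rw [trace_outer, IsUnitVec]
  exact_mod_cast Iff.rfl

lemma mul_outer_mul_conjTranspose (W : Matrix m n ℂ) (v : n → ℂ) :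
    W * outer v * Wᴴ = outer (W *ᵥ v) := by
  rw [outer, outer, vecMulVec_eq Unit, vecMulVec_eq Unit, ← Matrix.mul_assoc,
    ← replicateCol_mulVec, star_mulVec, replicateRow_vecMul, Matrix.mul_assoc]

lemma trace_mul_mul_conjTranspose_of_isometry [DecidableEq n] {W : Matrix m n ℂ} (hW : Wᴴ * W = 1)
    (M : Matrix n n ℂ) : (W * M * Wᴴ).trace = M.trace := by
  rw [trace_mul_cycle, hW, Matrix.one_mul]

lemma conjTranspose_mul_mul_mul_of_isometry [DecidableEq n] {W : Matrix m n ℂ} (hW : Wᴴ * W = 1)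
    (M : Matrix n n ℂ) : Wᴴ * (W * M * Wᴴ) * W = M := by
  rw [← Matrix.mul_assoc, ← Matrix.mul_assoc, hW, Matrix.one_mul, Matrix.mul_assoc, hW,
    Matrix.mul_one]

lemma isUnitVec_mulVec_iff_of_isometry [DecidableEq n] {W : Matrix m n ℂ} (hW : Wᴴ * W = 1)
    (v : n → ℂ) :
    IsUnitVec (W *ᵥ v) ↔ IsUnitVec v := by
  rw [isUnitVec_iff_trace_outer, isUnitVec_iff_trace_outer, ← mul_outer_mul_conjTranspose,
    trace_mul_mul_conjTranspose_of_isometry hW]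

lemma isUnitVec_single [DecidableEq n] (j : n) : IsUnitVec (Pi.single j 1 : n → ℂ) := by
  simp [IsUnitVec, Pi.single_apply, apply_ite (fun z : ℂ => ‖z‖ ^ 2)]

lemma mul_ensembleAvg_mul_conjTranspose (W : Matrix m n ℂ) (p : ι → ℝ) (v : ι → n → ℂ) :
    W * ensembleAvg p v * Wᴴ = ensembleAvg p (fun i => W *ᵥ v i) := by
  simp only [ensembleAvg, Matrix.mul_sum, Matrix.sum_mul, Matrix.mul_smul, Matrix.smul_mul,
    mul_outer_mul_conjTranspose]

lemma trace_ensembleAvg (p : ι → ℝ) (v : ι → n → ℂ) :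
    (ensembleAvg p v).trace = ((∑ i, p i * ∑ x, ‖v i x‖ ^ 2 : ℝ) : ℂ) := by
  simp [ensembleAvg, trace_sum, trace_outer]

lemma sum_eq_one_of_trace_ensembleAvg {p : ι → ℝ} {v : ι → n → ℂ} (hv : ∀ i, IsUnitVec (v i))
    (htr : (ensembleAvg p v).trace = 1) : ∑ i, p i = 1 := by
  simp only [trace_ensembleAvg, show ∀ i, ∑ x, ‖v i x‖ ^ 2 = 1 from hv, mul_one] at htr
  exact_mod_cast htr

lemma eq_zero_of_ensembleAvg_eq_zero {p : ι → ℝ} {v : ι → n → ℂ} (hp : ∀ i, 0 ≤ p i)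
    (h : ensembleAvg p v = 0) {i : ι} (hi : p i ≠ 0) : v i = 0 := by
  have htr := congrArg Matrix.trace h
  rw [trace_ensembleAvg, trace_zero, Complex.ofReal_eq_zero,
    Finset.sum_eq_zero_iff_of_nonneg fun j _ => mul_nonneg (hp j) (by positivity)] at htr
  have hnorm := (mul_eq_zero.mp (htr i (Finset.mem_univ i))).resolve_left hi
  rw [Finset.sum_eq_zero_iff_of_nonneg fun x _ => by positivity] at hnorm
  funext x
  simpa using hnorm x (Finset.mem_univ x)

lemma ensembleAvg_congr {p : ι → ℝ} {v w : ι → n → ℂ} (h : ∀ i, p i ≠ 0 → v i = w i) :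
    ensembleAvg p v = ensembleAvg p w := by
  refine Finset.sum_congr rfl fun i _ => ?_
  by_cases hi : p i = 0
  · simp [hi]
  · rw [h i hi]

lemma ensembleAvg_comp_equiv {κ : Type} [Fintype κ] (e : κ ≃ ι) (p : ι → ℝ)
    (v : ι → n → ℂ) : ensembleAvg (p ∘ e) (v ∘ e) = ensembleAvg p v :=
  e.sum_comp fun i => (p i : ℂ) • outer (v i)

lemma ensembleAvg_subtype_ne_zero (p : ι → ℝ) (v : ι → n → ℂ) :
    ensembleAvg (fun i : {i // p i ≠ 0} => p i) (fun i => v i) = ensembleAvg p v := by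
  classical
  rw [ensembleAvg, ensembleAvg, ← Finset.sum_subtype {i | p i ≠ 0} (fun i => by simp)
    (fun i => (p i : ℂ) • outer (v i))]
  exact Finset.sum_filter_of_ne fun i _ hi h => hi (by simp [h])

lemma diagonal_eq_ensembleAvg [DecidableEq n] (c : n → ℝ) :
    diagonal (fun i => (c i : ℂ)) = ensembleAvg c (fun i => Pi.single i 1) := by
  ext x y
  by_cases h : x = y <;>
    simp [ensembleAvg, outer, vecMulVec_apply, Matrix.sum_apply, Pi.single_apply, h]

end Ensemble

section Spectral

variable {n : Type} [Fintype n] [DecidableEq n]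

lemma conjTranspose_eigenvectorUnitary_mul_self {A : Matrix n n ℂ} (hA : A.IsHermitian) :
    (hA.eigenvectorUnitary : Matrix n n ℂ)ᴴ * hA.eigenvectorUnitary = 1 := by
  rw [← star_eq_conjTranspose]
  exact Unitary.coe_star_mul_self _

lemma isUnitVec_eigenvectorBasis {A : Matrix n n ℂ} (hA : A.IsHermitian) (j : n) :
    IsUnitVec ⇑(hA.eigenvectorBasis j) := by
  rw [← hA.eigenvectorUnitary_mulVec,
    isUnitVec_mulVec_iff_of_isometry (conjTranspose_eigenvectorUnitary_mul_self hA)]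
  exact isUnitVec_single j

lemma Matrix.IsHermitian.eq_ensembleAvg_eigenvalues {A : Matrix n n ℂ} (hA : A.IsHermitian) :
    A = ensembleAvg hA.eigenvalues fun j => ⇑(hA.eigenvectorBasis j) := by
  conv_lhs => rw [hA.spectral_theorem, Unitary.conjStarAlgAut_apply, star_eq_conjTranspose]
  rw [show diagonal (RCLike.ofReal ∘ hA.eigenvalues) = diagonal fun j => (hA.eigenvalues j : ℂ)
    from rfl, diagonal_eq_ensembleAvg, mul_ensembleAvg_mul_conjTranspose]
  simp_rw [hA.eigenvectorUnitary_mulVec]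

lemma IsDensityMatrix.exists_ensemble {ρ : Matrix n n ℂ} (hρ : IsDensityMatrix ρ) :
    ∃ (k : ℕ) (p : Fin k → ℝ) (v : Fin k → n → ℂ),
      (∀ i, 0 ≤ p i) ∧ (∀ i, IsUnitVec (v i)) ∧ ensembleAvg p v = ρ := by
  let e := (Fintype.equivFin n).symm
  refine ⟨_, hρ.1.1.eigenvalues ∘ e, (fun j => ⇑(hρ.1.1.eigenvectorBasis j)) ∘ e,
    fun i => hρ.1.eigenvalues_nonneg _, fun i => isUnitVec_eigenvectorBasis _ _, ?_⟩
  rw [ensembleAvg_comp_equiv, ← hρ.1.1.eq_ensembleAvg_eigenvalues]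

lemma IsDensityMatrix.mul_mul_conjTranspose_of_isometry {m : Type} [Fintype m] [DecidableEq m]
    {ρ : Matrix n n ℂ} (hρ : IsDensityMatrix ρ) {W : Matrix m n ℂ} (hW : Wᴴ * W = 1) :
    IsDensityMatrix (W * ρ * Wᴴ) :=
  ⟨hρ.1.mul_mul_conjTranspose_same W, by rw [trace_mul_mul_conjTranspose_of_isometry hW, hρ.2]⟩

lemma vNEntropy_nonneg {ρ : Matrix n n ℂ} (hρ : IsDensityMatrix ρ) : 0 ≤ vNEntropy ρ := by
  obtain ⟨hpsd, htr⟩ := hρ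
  have hsum : ∑ i, hpsd.1.eigenvalues i = 1 := by
    have h := hpsd.1.trace_eq_sum_eigenvalues
    rw [htr, ← RCLike.ofReal_sum] at h
    exact RCLike.ofReal_injective (h.symm.trans RCLike.ofReal_one.symm)
  rw [vNEntropy, dif_pos hpsd.1, neg_nonneg]
  refine Finset.sum_nonpos fun i _ => ?_
  have h0 : 0 ≤ hpsd.1.eigenvalues i := hpsd.eigenvalues_nonneg i
  have h1 : hpsd.1.eigenvalues i ≤ 1 :=
    hsum ▸ Finset.single_le_sum (fun j _ => hpsd.eigenvalues_nonneg j) (Finset.mem_univ i)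
  exact mul_nonpos_of_nonneg_of_nonpos h0 (Real.log_nonpos h0 h1)

theorem Matrix.PosSemidef.exists_isometry_posDef_conj_eq {σ : Matrix n n ℂ} (hσ : σ.PosSemidef) :
    ∃ (V : Matrix n (Fin σ.rank) ℂ) (ρ : Matrix (Fin σ.rank) (Fin σ.rank) ℂ),
      Vᴴ * V = 1 ∧ ρ.PosDef ∧ V * ρ * Vᴴ = σ := by
  let e : Fin σ.rank ≃ {i // hσ.1.eigenvalues i ≠ 0} :=
    (Fintype.equivFinOfCardEq hσ.1.rank_eq_card_non_zero_eigs.symm).symm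
  let f : Fin σ.rank → n := fun j => e j
  let U : Matrix n n ℂ := hσ.1.eigenvectorUnitary
  have hcol : ∀ j, U.submatrix id f *ᵥ Pi.single j 1 = ⇑(hσ.1.eigenvectorBasis (f j)) := by
    intro j
    funext x
    simp [U]
  refine ⟨U.submatrix id f, diagonal fun j => (hσ.1.eigenvalues (f j) : ℂ), ?_, ?_, ?_⟩
  · rw [conjTranspose_submatrix, ← submatrix_mul _ _ _ _ _ Function.bijective_id,
      conjTranspose_eigenvectorUnitary_mul_self,
      submatrix_one f (Subtype.val_injective.comp e.injective)]
  · refine posDef_diagonal_iff.mpr fun j => ?_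
    exact_mod_cast lt_of_le_of_ne (hσ.eigenvalues_nonneg _) (Ne.symm (e j).2)
  · rw [diagonal_eq_ensembleAvg, mul_ensembleAvg_mul_conjTranspose]
    simp_rw [hcol]
    conv_rhs => rw [hσ.1.eq_ensembleAvg_eigenvalues, ← ensembleAvg_subtype_ne_zero,
      ← ensembleAvg_comp_equiv e]
    rfl

end Spectral

section Isometry

variable {ι n m : Type} [Fintype ι] [Fintype n] [DecidableEq n] [Fintype m] [DecidableEq m]

/-- `1 - V Vᴴ` annihilates `V ρ Vᴴ`, hence every vector of positive weight in its ensemble. -/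
lemma mulVec_conjTranspose_mulVec_of_ensembleAvg_eq {V : Matrix m n ℂ} (hV : Vᴴ * V = 1)
    {ρ : Matrix n n ℂ} {p : ι → ℝ} {w : ι → m → ℂ} (hp : ∀ i, 0 ≤ p i)
    (hs : ensembleAvg p w = V * ρ * Vᴴ) {i : ι} (hi : p i ≠ 0) : V *ᵥ (Vᴴ *ᵥ w i) = w i := by
  set Q : Matrix m m ℂ := 1 - V * Vᴴ
  have hQV : Q * V = 0 := by
    rw [Matrix.sub_mul, Matrix.one_mul, Matrix.mul_assoc, hV, Matrix.mul_one, sub_self]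
  have hQw : ensembleAvg p (fun j => Q *ᵥ w j) = 0 := by
    rw [← mul_ensembleAvg_mul_conjTranspose, hs, ← Matrix.mul_assoc, ← Matrix.mul_assoc,
      hQV, Matrix.zero_mul, Matrix.zero_mul, Matrix.zero_mul]
  have hQwi : Q *ᵥ w i = 0 := eq_zero_of_ensembleAvg_eq_zero hp hQw hi
  rw [sub_mulVec, one_mulVec, sub_eq_zero] at hQwi
  rw [mulVec_mulVec]
  exact hQwi.symm

lemma exists_isometry_preimage_of_ensembleAvg_eq [Nonempty n] {V : Matrix m n ℂ}
    (hV : Vᴴ * V = 1) {ρ : Matrix n n ℂ} {p : ι → ℝ} {w : ι → m → ℂ} (hp : ∀ i, 0 ≤ p i)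
    (hw : ∀ i, IsUnitVec (w i)) (hs : ensembleAvg p w = V * ρ * Vᴴ) :
    ∃ v : ι → n → ℂ, (∀ i, IsUnitVec (v i)) ∧ ∀ i, p i ≠ 0 → V *ᵥ v i = w i := by
  classical
  let j₀ : n := Classical.arbitrary n
  refine ⟨fun i => if p i = 0 then Pi.single j₀ 1 else Vᴴ *ᵥ w i, fun i => ?_, fun i hi => ?_⟩
  · by_cases hi : p i = 0
    · simpa [hi] using isUnitVec_single j₀
    · simp only [if_neg hi]
      rw [← isUnitVec_mulVec_iff_of_isometry hV,
        mulVec_conjTranspose_mulVec_of_ensembleAvg_eq hV hp hs hi]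
      exact hw i
  · simp only [if_neg hi]
    exact mulVec_conjTranspose_mulVec_of_ensembleAvg_eq hV hp hs hi

end Isometry

section PartialTrace

variable {A B : Type} [Fintype A] [Fintype B]

lemma trace_traceB (σ : Matrix (A × B) (A × B) ℂ) : (traceB σ).trace = σ.trace :=
  (Fintype.sum_prod_type fun x : A × B => σ x x).symm

lemma isDensityMatrix_traceB_outer [DecidableEq A] {w : A × B → ℂ} (hw : IsUnitVec w) :
    IsDensityMatrix (traceB (outer w)) := by
  let M : Matrix A B ℂ := Matrix.of fun a b => w (a, b)
  have hM : traceB (outer w) = M * Mᴴ := by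
    ext a a'
    simp [traceB, outer, M, Matrix.mul_apply, vecMulVec_apply]
  refine ⟨hM ▸ posSemidef_self_mul_conjTranspose M, ?_⟩
  rw [trace_traceB, ← isUnitVec_iff_trace_outer]
  exact hw

end PartialTrace

section Channel

variable {I A B : Type} [Fintype I] [DecidableEq I] [Fintype A] [DecidableEq A] [Fintype B]

def QChannel.ofIsometry (V : Matrix (A × B) I ℂ) (hV : Vᴴ * V = 1) : QChannel I A where
  ι := B
  A b := Matrix.of fun a j => V (a, b) j
  complete := by
    rw [← hV]
    ext j k
    simp only [Matrix.sum_apply, Matrix.mul_apply, conjTranspose_apply, Matrix.of_apply]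
    rw [Finset.sum_comm]
    exact (Fintype.sum_prod_type fun x : A × B => star (V x j) * V x k).symm

lemma QChannel.ofIsometry_app {V : Matrix (A × B) I ℂ} (hV : Vᴴ * V = 1) (μ : Matrix I I ℂ) :
    (QChannel.ofIsometry V hV).app μ = traceB (V * μ * Vᴴ) := by
  ext a a'
  simp only [QChannel.app, QChannel.ofIsometry, traceB, Matrix.sum_apply, Matrix.of_apply,
    Matrix.mul_apply, conjTranspose_apply]
  rfl

def entFValues (σ : Matrix (A × B) (A × B) ℂ) : Set ℝ :=
  { x | ∃ (n : ℕ) (p : Fin n → ℝ) (v : Fin n → A × B → ℂ),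
    (∀ i, 0 ≤ p i) ∧ (∀ i, IsUnitVec (v i)) ∧
    (∑ i, (p i : ℂ) • outer (v i)) = σ ∧
    x = ∑ i, p i * vNEntropy (traceB (outer (v i))) }

def cHolevoValues (N : QChannel I A) (ρ : Matrix I I ℂ) : Set ℝ :=
  { x | ∃ (n : ℕ) (p : Fin n → ℝ) (v : Fin n → I → ℂ),
    (∀ i, 0 ≤ p i) ∧ (∑ i, p i = 1) ∧ (∀ i, IsUnitVec (v i)) ∧
    (∑ i, (p i : ℂ) • outer (v i)) = ρ ∧
    x = vNEntropy (N.app ρ) - ∑ i, p i * vNEntropy (N.app (outer (v i))) }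

lemma entFValues_nonempty [DecidableEq B] {σ : Matrix (A × B) (A × B) ℂ}
    (hσ : IsDensityMatrix σ) : (entFValues σ).Nonempty :=
  let ⟨k, p, v, hp, hv, hs⟩ := hσ.exists_ensemble
  ⟨_, k, p, v, hp, hv, hs, rfl⟩

lemma entFValues_bddBelow (σ : Matrix (A × B) (A × B) ℂ) : BddBelow (entFValues σ) := by
  refine ⟨0, ?_⟩
  rintro _ ⟨k, p, w, hp, hw, -, rfl⟩
  exact Finset.sum_nonneg fun i _ =>
    mul_nonneg (hp i) (vNEntropy_nonneg (isDensityMatrix_traceB_outer (hw i)))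

lemma cHolevoValues_ofIsometry [DecidableEq B] {V : Matrix (A × B) I ℂ} (hV : Vᴴ * V = 1)
    {ρ : Matrix I I ℂ} (hρ : ρ.trace = 1) :
    cHolevoValues (QChannel.ofIsometry V hV) ρ =
      (vNEntropy (traceB (V * ρ * Vᴴ)) - ·) '' entFValues (V * ρ * Vᴴ) := by
  have : Nonempty I := nonempty_of_trace_eq_one hρ
  ext x
  simp only [cHolevoValues, QChannel.ofIsometry_app, mul_outer_mul_conjTranspose]
  constructor
  · rintro ⟨k, p, v, hp, -, hv, hs, rfl⟩
    refine ⟨_, ⟨k, p, fun i => V *ᵥ v i, hp,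
      fun i => (isUnitVec_mulVec_iff_of_isometry hV _).2 (hv i), ?_, rfl⟩, rfl⟩
    rw [← hs]
    exact (mul_ensembleAvg_mul_conjTranspose V p v).symm
  · rintro ⟨_, ⟨k, p, w, hp, hw, hs, rfl⟩, rfl⟩
    obtain ⟨v, hv, hVv⟩ := exists_isometry_preimage_of_ensembleAvg_eq hV hp hw hs
    have havg : ensembleAvg p v = ρ := by
      rw [← conjTranspose_mul_mul_mul_of_isometry hV (ensembleAvg p v),
        mul_ensembleAvg_mul_conjTranspose, ensembleAvg_congr hVv,
        show ensembleAvg p w = V * ρ * Vᴴ from hs,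
        conjTranspose_mul_mul_mul_of_isometry hV]
    refine ⟨k, p, v, hp, sum_eq_one_of_trace_ensembleAvg hv (havg ▸ hρ), hv, havg, ?_⟩
    congr 1
    refine Finset.sum_congr rfl fun i _ => ?_
    by_cases hi : p i = 0
    · simp [hi]
    · rw [hVv i hi]

theorem cHolevoCap_ofIsometry [DecidableEq B] {V : Matrix (A × B) I ℂ} (hV : Vᴴ * V = 1)
    {ρ : Matrix I I ℂ} (hρ : IsDensityMatrix ρ) :
    cHolevoCap (QChannel.ofIsometry V hV) ρ =
      vNEntropy (traceB (V * ρ * Vᴴ)) - entF (V * ρ * Vᴴ) := by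
  change sSup (cHolevoValues _ ρ) = _ - sInf (entFValues _)
  rw [cHolevoValues_ofIsometry hV hρ.2, ← Antitone.map_csInf_of_continuousAt
    (continuous_sub_left _).continuousAt (fun _ _ h => sub_le_sub_left h _)
    (entFValues_nonempty (hρ.mul_mul_conjTranspose_of_isometry hV)) (entFValues_bddBelow _)]

end Channel

/-- Converse direction of the MSW correspondence: every bipartite density matrix `σ`
arises as `V ρ Vᴴ` for an isometry `V` from a space of dimension `rank σ` and a
positive definite density matrix `ρ`, and the associated channel
`N(μ) = Tr_B (V μ Vᴴ)` satisfies `N(ρ) = Tr_B σ` and `χ_N(ρ) = H(Tr_B σ) - E_F(σ)`. -/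
theorem msw_converse {dA dB : ℕ}
    (σ : Matrix (Fin dA × Fin dB) (Fin dA × Fin dB) ℂ) (hσ : IsDensityMatrix σ) :
    ∃ (dIn : ℕ) (V : Matrix (Fin dA × Fin dB) (Fin dIn) ℂ)
      (ρ : Matrix (Fin dIn) (Fin dIn) ℂ),
      dIn = σ.rank ∧ Vᴴ * V = 1 ∧ ρ.PosDef ∧ ρ.trace = 1 ∧ V * ρ * Vᴴ = σ ∧
      ∃ N : QChannel (Fin dIn) (Fin dA),
        (∀ μ : Matrix (Fin dIn) (Fin dIn) ℂ, N.app μ = traceB (V * μ * Vᴴ)) ∧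
        N.app ρ = traceB σ ∧
        cHolevoCap N ρ = vNEntropy (traceB σ) - entF σ := by
  obtain ⟨V, ρ, hV, hρ, hσρ⟩ := hσ.1.exists_isometry_posDef_conj_eq
  have hρtr : ρ.trace = 1 := by
    rw [← trace_mul_mul_conjTranspose_of_isometry hV, hσρ, hσ.2]
  refine ⟨σ.rank, V, ρ, rfl, hV, hρ, hρtr, hσρ, QChannel.ofIsometry V hV,
    QChannel.ofIsometry_app hV, by rw [QChannel.ofIsometry_app, hσρ], ?_⟩
  rw [cHolevoCap_ofIsometry hV ⟨hρ.posSemidef, hρtr⟩, hσρ]
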